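/- Let p : ℕ → [1,∞] and let (n_k)_{k≥1} be a strictly increasing sequence of positive integers. Define q : ℕ → [1,∞] by q(k) = p(n_k), and for a bounded sequence y = (y_k) let φ(y) be the sequence with φ(y)_{n₁} = y₁, φ(y)_{n_k + 1} = y_{k+1} for k ≥ 1, and all other coordinates zero. Then Φ_p(φ(y)) = Φ_q(y) for every bounded sequence y; i.e., the coordinate subspace of ℓ^{p(·)} supported on {n₁, n₁+1, n₂+1, n₃+1, …} is isometric to ℓ^{q(·)}. -/

import Mathlib

open scoped ENNReal

/-- `t ⊞_p s`: for `p < ∞`, `(t^p + s^p)^(1/p)`; for `p = ∞`, `max t s`. -/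
noncomputable def boxPlus (p : ℝ≥0∞) (t s : ℝ) : ℝ :=
  if p = ∞ then max t s else (t ^ p.toReal + s ^ p.toReal) ^ (1 / p.toReal)

/-- The recursively defined seminorms `|||x|||_(k)` (0-indexed). -/
noncomputable def seqNorm (p : ℕ → ℝ≥0∞) (x : ℕ → ℝ) : ℕ → ℝ
  | 0 => boxPlus (p 0) |x 0| |x 1|
  | k + 1 => boxPlus (p (k + 1)) (seqNorm p x k) |x (k + 2)|

/-- `Φ_p(x) = lim_k |||x|||_(k)`, as the supremum of the nondecreasing sequence. -/
noncomputable def Phi (p : ℕ → ℝ≥0∞) (x : ℕ → ℝ) : ℝ≥0∞ :=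
  ⨆ k, ENNReal.ofReal (seqNorm p x k)

/-- `x` is a bounded real sequence, i.e. `x ∈ ℓ^∞`. -/
def IsBddSeq (x : ℕ → ℝ) : Prop := ∃ M : ℝ, ∀ n, |x n| ≤ M

/-- Membership in the variable exponent space `ℓ^{p(·)}`. -/
def MemVLp (p : ℕ → ℝ≥0∞) (x : ℕ → ℝ) : Prop := IsBddSeq x ∧ Phi p x < ⊤

open scoped Classical in
/-- The placement map: `(place n y) (n 0) = y 0`, `(place n y) (n k + 1) = y (k+1)`,
and all other coordinates vanish. -/
noncomputable def place (n : ℕ → ℕ) (y : ℕ → ℝ) : ℕ → ℝ := fun j =>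
  if j = n 0 then y 0
  else if h : ∃ k, j = n k + 1 then y (h.choose + 1)
  else 0

/-! Since `0` is neutral for `⊞_p`, the partial norms `|||place n y|||_(j)` are constant on the
gaps between consecutive points of the support, and at `j = n m` they equal `|||y|||_(m)`. As
`|||x|||_(j)` is nondecreasing in `j` and `n` is cofinal, both suprema agree. -/

section BoxPlus

variable {p : ℝ≥0∞} {t s : ℝ}

lemma boxPlus_nonneg (ht : 0 ≤ t) (hs : 0 ≤ s) : 0 ≤ boxPlus p t s := by
  unfold boxPlus
  split_ifs
  · exact le_max_of_le_left ht
  · positivity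

lemma boxPlus_zero_right (hp : p ≠ 0) (ht : 0 ≤ t) : boxPlus p t 0 = t := by
  unfold boxPlus
  split_ifs with h
  · exact max_eq_left ht
  · have hr : p.toReal ≠ 0 := ENNReal.toReal_ne_zero.2 ⟨hp, h⟩
    rw [Real.zero_rpow hr, add_zero, one_div, Real.rpow_rpow_inv ht hr]

lemma boxPlus_zero_left (hp : p ≠ 0) (hs : 0 ≤ s) : boxPlus p 0 s = s := by
  unfold boxPlus
  split_ifs with h
  · exact max_eq_right hs
  · have hr : p.toReal ≠ 0 := ENNReal.toReal_ne_zero.2 ⟨hp, h⟩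
    rw [Real.zero_rpow hr, zero_add, one_div, Real.rpow_rpow_inv hs hr]

lemma le_boxPlus (hp : p ≠ 0) (ht : 0 ≤ t) (hs : 0 ≤ s) : t ≤ boxPlus p t s := by
  unfold boxPlus
  split_ifs with h
  · exact le_max_left _ _
  · have hr : 0 < p.toReal := ENNReal.toReal_pos hp h
    calc t = (t ^ p.toReal) ^ (1 / p.toReal) := by rw [one_div, Real.rpow_rpow_inv ht hr.ne']
      _ ≤ _ := by gcongr; exact le_add_of_nonneg_right (by positivity)

end BoxPlus

section SeqNorm

variable {p : ℕ → ℝ≥0∞} {x : ℕ → ℝ}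

lemma seqNorm_nonneg (p : ℕ → ℝ≥0∞) (x : ℕ → ℝ) : ∀ k, 0 ≤ seqNorm p x k
  | 0 => boxPlus_nonneg (abs_nonneg _) (abs_nonneg _)
  | k + 1 => boxPlus_nonneg (seqNorm_nonneg p x k) (abs_nonneg _)

lemma seqNorm_monotone (hp : ∀ m, p m ≠ 0) : Monotone (seqNorm p x) :=
  monotone_nat_of_le_succ fun k => le_boxPlus (hp _) (seqNorm_nonneg p x k) (abs_nonneg _)

lemma seqNorm_eq_boxPlus_of_eq_zero (hp : ∀ m, p m ≠ 0) {j : ℕ} (hx : ∀ i < j, x i = 0) :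
    seqNorm p x j = boxPlus (p j) |x j| |x (j + 1)| := by
  induction j with
  | zero => rfl
  | succ j ih =>
    have hprev : seqNorm p x j = |x (j + 1)| := by
      rw [ih fun i hi => hx i (by omega), hx j (by omega), abs_zero,
        boxPlus_zero_left (hp j) (abs_nonneg _)]
    rw [seqNorm, hprev]

lemma seqNorm_add_of_eq_zero (hp : ∀ m, p m ≠ 0) {j d : ℕ}
    (hx : ∀ i < d, x (j + i + 2) = 0) :
    seqNorm p x (j + d) = seqNorm p x j := by
  induction d with
  | zero => rfl
  | succ d ih =>
    rw [← add_assoc, seqNorm, ih fun i hi => hx i (by omega), hx d (by omega), abs_zero,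
      boxPlus_zero_right (hp _) (seqNorm_nonneg p x j)]

end SeqNorm

section Place

variable {n : ℕ → ℕ} (y : ℕ → ℝ)

lemma place_apply_zero : place n y (n 0) = y 0 := by
  simp [place]

lemma place_apply_add_one (hn : StrictMono n) (k : ℕ) : place n y (n k + 1) = y (k + 1) := by
  have hne : n k + 1 ≠ n 0 := by have := hn.monotone (Nat.zero_le k); omega
  have hex : ∃ i, n k + 1 = n i + 1 := ⟨k, rfl⟩
  have hchoose : hex.choose = k := hn.injective (by have := hex.choose_spec; omega)
  simp only [place, if_neg hne, dif_pos hex, hchoose]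

lemma place_eq_zero {j : ℕ} (h0 : j ≠ n 0) (h1 : ∀ k, j ≠ n k + 1) : place n y j = 0 := by
  simp only [place, if_neg h0, dif_neg (not_exists.mpr h1)]

lemma place_eq_zero_of_lt (hn : StrictMono n) {j : ℕ} (hj : j < n 0) : place n y j = 0 :=
  place_eq_zero y hj.ne fun k => by have := hn.monotone (Nat.zero_le k); omega

lemma place_eq_zero_of_gap (hn : StrictMono n) {m j : ℕ} (hmj : n m + 1 < j)
    (hj : j < n (m + 1) + 1) : place n y j = 0 := by
  refine place_eq_zero y (by have := hn.monotone (Nat.zero_le m); omega) fun k => ?_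
  rcases le_or_gt k m with hk | hk
  · have := hn.monotone hk; omega
  · have := hn.monotone (show m + 1 ≤ k by omega); omega

end Place

lemma seqNorm_place_apply {p : ℕ → ℝ≥0∞} (hp : ∀ m, p m ≠ 0) {n : ℕ → ℕ}
    (hn : StrictMono n) (y : ℕ → ℝ) :
    ∀ m, seqNorm p (place n y) (n m) = seqNorm (fun k => p (n k)) y m
  | 0 => by
    rw [seqNorm_eq_boxPlus_of_eq_zero hp fun i hi => place_eq_zero_of_lt y hn hi,
      place_apply_zero, place_apply_add_one y hn]
    rfl
  | m + 1 => by
    obtain ⟨d, hd⟩ : ∃ d, n (m + 1) = n m + d + 1 := ⟨n (m + 1) - n m - 1, by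
      have := hn (lt_add_one m); omega⟩
    have hgap : seqNorm p (place n y) (n m + d) = seqNorm (fun k => p (n k)) y m := by
      rw [seqNorm_add_of_eq_zero hp fun i hi =>
          place_eq_zero_of_gap y hn (m := m) (by omega) (by omega), seqNorm_place_apply hp hn y m]
    rw [hd, seqNorm, hgap, show n m + d + 2 = n (m + 1) + 1 by omega, ← hd,
      place_apply_add_one y hn]
    rfl

theorem coord_subspace_isometric_general (p : ℕ → ℝ≥0∞) (hp : ∀ m, 1 ≤ p m)
    (n : ℕ → ℕ) (hn : StrictMono n) (y : ℕ → ℝ) :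
    Phi p (place n y) = Phi (fun k => p (n k)) y := by
  have hp0 : ∀ m, p m ≠ 0 := fun m => (zero_lt_one.trans_le (hp m)).ne'
  have hmono : Monotone fun j => ENNReal.ofReal (seqNorm p (place n y) j) :=
    ENNReal.ofReal_mono.comp (seqNorm_monotone hp0)
  unfold Phi
  rw [← hmono.iSup_comp_eq fun j => ⟨j, hn.le_apply⟩]
  simp only [seqNorm_place_apply hp0 hn]

/-- The coordinate subspace of `ℓ^{p(·)}` supported on
`{n 0, n 0 + 1, n 1 + 1, n 2 + 1, …}` is isometric to `ℓ^{q(·)}`,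
where `q k = p (n k)`. -/
theorem coord_subspace_isometric (p : ℕ → ℝ≥0∞) (hp : ∀ m, 1 ≤ p m)
    (n : ℕ → ℕ) (hn : StrictMono n) (y : ℕ → ℝ) (hy : IsBddSeq y) :
    Phi p (place n y) = Phi (fun k => p (n k)) y :=
  coord_subspace_isometric_general p hp n hn y
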